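/- arXiv:2209.14128 — 3 statements merged into one kernel-verified Lean document; each statement's English description precedes it below -/
import Mathlib

section
/- Let P be an n×n left-stochastic matrix, ε ∈ (0,1), f ∈ ℝ^{n+1}, u = (I - Ptilde^ε)^{-1} f, and V^ε(P,f) = (P^ε_{11}u_1, ..., P^ε_{nn}u_n, u_{n+1}). Then ∑_{i=1}^{n+1} V^ε_i(P,f) = ∑_{i=1}^{n+1} f_i (conservation of voting power). -/
open Matrix

theorem stmt_10 (n : ℕ) (P : Matrix (Fin n) (Fin n) ℝ)
    (hpos : ∀ i j, 0 ≤ P i j) (hcol : ∀ j, ∑ i, P i j = 1)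
    (ε : ℝ) (hε : ε ∈ Set.Ioo (0 : ℝ) 1)
    (f : Fin n ⊕ Unit → ℝ) :
    let Ptε : Matrix (Fin n ⊕ Unit) (Fin n ⊕ Unit) ℝ :=
      Matrix.fromBlocks ((1 - ε) • (P - Matrix.diagonal fun i => P i i)) 0
        (Matrix.of fun _ _ => ε) 0
    let u := ((1 : Matrix (Fin n ⊕ Unit) (Fin n ⊕ Unit) ℝ) - Ptε)⁻¹ *ᵥ f
    (∑ i : Fin n, (1 - ε) * P i i * u (Sum.inl i)) + u (Sum.inr ())
      = ∑ i : Fin n ⊕ Unit, f i := by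
  intro Ptε u
  obtain ⟨hε0, hε1⟩ := hε
  set A : Matrix (Fin n) (Fin n) ℝ := (1 - ε) • (P - Matrix.diagonal fun i => P i i) with hA
  set M : Matrix (Fin n ⊕ Unit) (Fin n ⊕ Unit) ℝ := 1 - Ptε with hM
  -- M as block matrix
  have hMblocks : M = Matrix.fromBlocks (1 - A) 0 (-(Matrix.of fun _ _ => ε)) 1 := by
    rw [hM, ← Matrix.fromBlocks_one]
    ext i j
    rcases i with i | i <;> rcases j with j | j <;>
      simp [Ptε, hA, Matrix.fromBlocks, Matrix.sub_apply, Matrix.smul_apply]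
  -- determinant of the upper-left block is nonzero by diagonal dominance
  have hdetA : ((1 : Matrix (Fin n) (Fin n) ℝ) - A).det ≠ 0 := by
    apply det_ne_zero_of_sum_col_lt_diag
    intro k
    have hdiag : ((1 : Matrix (Fin n) (Fin n) ℝ) - A) k k = 1 := by
      simp [hA, Matrix.sub_apply, Matrix.one_apply_eq]
    have hoff : ∀ i ∈ Finset.univ.erase k,
        ‖((1 : Matrix (Fin n) (Fin n) ℝ) - A) i k‖ = (1 - ε) * P i k := by
      intro i hi
      have hik : i ≠ k := Finset.ne_of_mem_erase hi
      have : ((1 : Matrix (Fin n) (Fin n) ℝ) - A) i k = -((1 - ε) * P i k) := by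
        simp [hA, Matrix.sub_apply, Matrix.one_apply_ne hik, Matrix.diagonal_apply_ne _ hik]
      rw [this, norm_neg, Real.norm_of_nonneg (mul_nonneg (by linarith) (hpos i k))]
    rw [Finset.sum_congr rfl hoff, hdiag, norm_one, ← Finset.mul_sum]
    have hsum : ∑ i ∈ Finset.univ.erase k, P i k = 1 - P k k := by
      have := hcol k
      rw [← Finset.add_sum_erase _ _ (Finset.mem_univ k)] at this
      linarith
    rw [hsum]
    nlinarith [hpos k k]
  have hdetM : M.det ≠ 0 := by
    rw [hMblocks, Matrix.det_fromBlocks_zero₁₂]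
    simpa using hdetA
  -- M *ᵥ u = f
  have hMu : M *ᵥ u = f := by
    show M *ᵥ (M⁻¹ *ᵥ f) = f
    rw [Matrix.mulVec_mulVec, Matrix.mul_nonsing_inv M (Ne.isUnit hdetM), Matrix.one_mulVec]
  -- sum both sides
  have hsumf : ∑ i : Fin n ⊕ Unit, f i = ∑ j : Fin n ⊕ Unit, (∑ i, M i j) * u j := by
    rw [← hMu]
    simp only [Matrix.mulVec, dotProduct]
    rw [Finset.sum_comm]
    simp [add_mul, Finset.sum_mul]
  have hcolM1 : ∀ j : Fin n, ∑ i : Fin n ⊕ Unit, M i (Sum.inl j) = (1 - ε) * P j j := by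
    intro j
    rw [Fintype.sum_sum_type]
    have h1 : ∀ i : Fin n, M (Sum.inl i) (Sum.inl j)
        = (if i = j then (1 : ℝ) else 0) - (1 - ε) * (P i j - if i = j then P j j else 0) := by
      intro i
      by_cases hij : i = j
      · subst hij
        simp [hM, Ptε, Matrix.sub_apply, Matrix.one_apply_eq]
      · simp [hM, Ptε, Matrix.sub_apply, Matrix.one_apply, hij,
          Matrix.diagonal_apply_ne _ hij]
    have h2 : ∑ a : Unit, M (Sum.inr a) (Sum.inl j) = -ε := by
      simp [hM, Ptε, Matrix.sub_apply, Matrix.one_apply]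
    rw [h2, Finset.sum_congr rfl fun i _ => h1 i, Finset.sum_sub_distrib,
      ← Finset.mul_sum, Finset.sum_sub_distrib, hcol j,
      Finset.sum_ite_eq' Finset.univ j, Finset.sum_ite_eq' Finset.univ j]
    simp only [Finset.mem_univ, if_true]
    ring
  have hcolM2 : ∑ i : Fin n ⊕ Unit, M i (Sum.inr ()) = 1 := by
    rw [Fintype.sum_sum_type]
    have h1 : ∀ i : Fin n, M (Sum.inl i) (Sum.inr ()) = 0 := by
      intro i; simp [hM, Ptε, Matrix.sub_apply, Matrix.one_apply]
    simp [h1, hM, Ptε, Matrix.sub_apply, Matrix.one_apply]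
  rw [hsumf, Fintype.sum_sum_type]
  simp only [hcolM1, hcolM2]
  simp [mul_comm, mul_assoc]
end

section
/- Let A be an n×n {0,1}-valued left-stochastic matrix, written in block form A = [[P₁,0],[P₂,I]] with P₁ nilpotent (no delegation cycles among non-candidates), and let Atilde = A - diag(A₁₁,...,A_{nn}) = [[P₁,0],[P₂,0]]. Then lim_{k→∞} A^k 𝟏 = lim_{k→∞} (∑_{ℓ=0}^{k} Atilde^ℓ 𝟏) ⊙ d, where d ∈ ℝⁿ is the vector with d_i = A_{ii} and ⊙ denotes the entrywise product. -/
open Matrix Filter Topology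

theorem stmt_16 (a b : ℕ)
    (P₁ : Matrix (Fin a) (Fin a) ℝ) (P₂ : Matrix (Fin b) (Fin a) ℝ)
    (h01₁ : ∀ i j, P₁ i j = 0 ∨ P₁ i j = 1)
    (h01₂ : ∀ i j, P₂ i j = 0 ∨ P₂ i j = 1)
    (hcol : ∀ j : Fin a, (∑ i, P₁ i j) + ∑ i, P₂ i j = 1)
    (hdiag : ∀ i, P₁ i i = 0)
    (m : ℕ) (hnil : P₁ ^ m = 0) :
    let A : Matrix (Fin a ⊕ Fin b) (Fin a ⊕ Fin b) ℝ :=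
      Matrix.fromBlocks P₁ 0 P₂ (1 : Matrix (Fin b) (Fin b) ℝ)
    let Atilde : Matrix (Fin a ⊕ Fin b) (Fin a ⊕ Fin b) ℝ :=
      Matrix.fromBlocks P₁ 0 P₂ 0
    let d : Fin a ⊕ Fin b → ℝ := Sum.elim 0 1
    ∃ L : Fin a ⊕ Fin b → ℝ,
      Tendsto (fun k : ℕ => A ^ k *ᵥ (1 : Fin a ⊕ Fin b → ℝ)) atTop (𝓝 L)
      ∧ Tendsto
          (fun k : ℕ => fun i =>
            ((∑ ℓ ∈ Finset.range (k + 1), Atilde ^ ℓ) *ᵥ (1 : Fin a ⊕ Fin b → ℝ)) i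
              * d i)
          atTop (𝓝 L) := by
  intro A Atilde d
  have hA : A = Matrix.fromBlocks P₁ 0 P₂ (1 : Matrix (Fin b) (Fin b) ℝ) := rfl
  have hAt : Atilde = Matrix.fromBlocks P₁ 0 P₂ 0 := rfl
  have hd : d = Sum.elim (0 : Fin a → ℝ) (1 : Fin b → ℝ) := rfl
  set S : ℕ → Matrix (Fin b) (Fin a) ℝ := fun k => ∑ ℓ ∈ Finset.range k, P₂ * P₁ ^ ℓ
    with hSdef
  have hP1 : ∀ k, m ≤ k → P₁ ^ k = 0 := by
    intro k hk
    have : P₁ ^ k = P₁ ^ m * P₁ ^ (k - m) := by rw [← pow_add, Nat.add_sub_cancel' hk]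
    rw [this, hnil, zero_mul]
  have hSstab : ∀ k, m ≤ k → S k = S m := by
    intro k hk
    refine (Finset.sum_subset (Finset.range_subset_range.2 hk) ?_).symm
    intro ℓ _ hℓ'
    have hmℓ : m ≤ ℓ := le_of_not_gt fun h => hℓ' (Finset.mem_range.2 h)
    simp [hP1 ℓ hmℓ]
  have hS1 : ∀ k, S (k + 1) = S k * P₁ + P₂ := by
    intro k
    simp only [hSdef, Finset.sum_range_succ', pow_succ, pow_zero, mul_one]
    rw [Matrix.sum_mul]
    simp [Matrix.mul_assoc]
  have hS2 : ∀ k, S (k + 1) = S k + P₂ * P₁ ^ k := fun k => Finset.sum_range_succ _ _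
  have hApow : ∀ k, A ^ k = Matrix.fromBlocks (P₁ ^ k) 0 (S k) 1 := by
    intro k
    induction k with
    | zero => simp [hSdef, Matrix.fromBlocks_one]
    | succ k ih =>
      rw [pow_succ, ih, hA, Matrix.fromBlocks_multiply, hS1]
      simp [pow_succ]
  have hAtpow : ∀ ℓ : ℕ,
      Atilde ^ (ℓ + 1) = Matrix.fromBlocks (P₁ ^ (ℓ + 1)) 0 (P₂ * P₁ ^ ℓ) 0 := by
    intro ℓ
    induction ℓ with
    | zero => simp [hAt]
    | succ ℓ ih =>
      rw [pow_succ, ih, hAt, Matrix.fromBlocks_multiply]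
      simp [pow_succ]
      rw [Matrix.mul_assoc]
  have hT : ∀ k, (∑ ℓ ∈ Finset.range (k + 1), Atilde ^ ℓ)
      = Matrix.fromBlocks (∑ ℓ ∈ Finset.range (k + 1), P₁ ^ ℓ) 0 (S k) 1 := by
    intro k
    induction k with
    | zero => simp [hSdef, Matrix.fromBlocks_one]
    | succ k ih =>
      rw [Finset.sum_range_succ, ih, hAtpow, hS2,
        Finset.sum_range_succ (f := fun ℓ => P₁ ^ ℓ) (n := k + 1),
        Matrix.fromBlocks_add]
      simp
  have hone : (1 : Fin a ⊕ Fin b → ℝ) = Sum.elim (1 : Fin a → ℝ) (1 : Fin b → ℝ) := by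
    funext x; cases x <;> rfl
  refine ⟨Sum.elim (0 : Fin a → ℝ) (S m *ᵥ 1 + 1), ?_, ?_⟩
  · refine tendsto_const_nhds.congr' ?_
    filter_upwards [eventually_ge_atTop m] with k hk
    rw [hApow, hSstab k hk, hone, Matrix.fromBlocks_mulVec]
    simp [hP1 k hk]
  · refine tendsto_const_nhds.congr' ?_
    filter_upwards [eventually_ge_atTop m] with k hk
    funext i
    rw [hT, hSstab k hk, hone, Matrix.fromBlocks_mulVec, hd]
    cases i <;> simp
end

section
/- Let n ≥ 2. Define the 2×2 left-stochastic matrix P with P_{11} = 1/2, P_{21} = 1/2, P_{12} = 0, P_{22} = 1 (agent 1 keeps half her vote and delegates half to agent 2; agent 2 keeps everything). Then the standard classical generalization V^c(P) = lim_{k→∞}(P^k 𝟏) ⊙ diag(P) equals (0, 2), whereas the paper's measure V, computed via u = (I - Ptilde)^{-1} 𝟏 with Ptilde = P - diag(P_{11}, P_{22}) followed by V_i = P_{ii} u_i, equals (1/2, 3/2). -/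
open Matrix Filter Topology

lemma pow_P (k : ℕ) :
    (!![1/2, 0; 1/2, 1] : Matrix (Fin 2) (Fin 2) ℝ) ^ k
      = !![(1/2)^k, 0; 1-(1/2)^k, 1] := by
  induction k with
  | zero => rw [pow_zero, Matrix.one_fin_two]; norm_num
  | succ n ih =>
    rw [pow_succ, ih]
    ext i j
    fin_cases i <;> fin_cases j <;>
      simp [Matrix.mul_apply, Fin.sum_univ_two, pow_succ] <;> ring

theorem stmt_19 :
    let P : Matrix (Fin 2) (Fin 2) ℝ := !![1/2, 0; 1/2, 1]
    let Pt : Matrix (Fin 2) (Fin 2) ℝ := P - Matrix.diagonal fun i => P i i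
    let u := ((1 : Matrix (Fin 2) (Fin 2) ℝ) - Pt)⁻¹ *ᵥ (1 : Fin 2 → ℝ)
    Tendsto (fun k : ℕ => fun i => (P ^ k *ᵥ (1 : Fin 2 → ℝ)) i * P i i)
        atTop (𝓝 ![0, 2])
    ∧ (fun i => P i i * u i) = ![1/2, 3/2] := by
  intro P Pt u
  constructor
  · have hlim : Tendsto (fun k : ℕ => ((1:ℝ)/2)^k) atTop (𝓝 0) := by
      apply tendsto_pow_atTop_nhds_zero_of_lt_one <;> norm_num
    have key : Tendsto (fun k : ℕ => (fun i => (P ^ k *ᵥ (1 : Fin 2 → ℝ)) i * P i i))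
        atTop (𝓝 ![0, 2]) := by
      rw [tendsto_pi_nhds]
      intro i
      fin_cases i
      · have := hlim.mul_const ((1:ℝ)/2)
        simp only [P, pow_P, Matrix.mulVec, dotProduct, Fin.sum_univ_two]
        convert this using 2 with k <;> simp <;> ring
      · have := (tendsto_const_nhds (x := (2:ℝ))).sub hlim
        simp only [P, pow_P, Matrix.mulVec, dotProduct, Fin.sum_univ_two]
        convert this using 2 with k <;> simp <;> ring
    exact key
  · have hM : ((1 : Matrix (Fin 2) (Fin 2) ℝ) - Pt) = !![1, 0; -(1/2), 1] := by
      simp only [Pt, P]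
      ext i j
      fin_cases i <;> fin_cases j <;>
        simp [Matrix.one_apply, Matrix.diagonal_apply] <;> norm_num
    have hinv : ((1 : Matrix (Fin 2) (Fin 2) ℝ) - Pt)⁻¹ = !![1, 0; 1/2, 1] := by
      rw [hM]
      rw [Matrix.inv_def]
      norm_num [Matrix.det_fin_two, Matrix.adjugate_fin_two]
    have hu : u = ![1, 3/2] := by
      simp only [u, hinv]
      ext i
      fin_cases i <;>
        simp [Matrix.mulVec, dotProduct, Fin.sum_univ_two] <;> norm_num
    ext i
    fin_cases i <;> simp [hu, P] <;> norm_num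
end
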